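/- arXiv:2603.22460 — 4 statements merged into one kernel-verified Lean document; each statement's English description precedes it below -/
import Mathlib

section
/- Let n, m, N be positive integers, let X̂₀, X̂₁ ∈ ℝ^{n×N} and U₀ ∈ ℝ^{m×N} be data matrices, and let D ⊆ ℝⁿ be a compact convex set. Assume: (i) the stacked matrix Z ∈ ℝ^{(n+m)×N} whose first n rows are X̂₀ and last m rows are U₀ has rank n + m; (ii) there exist A⋆ ∈ ℝ^{n×n} and B⋆ ∈ ℝ^{n×m} such that for every column index i, the residual (column i of X̂₁) − A⋆·(column i of X̂₀) − B⋆·(column i of U₀) lies in D. Then the data-consistency set I := { (A, B) ∈ ℝ^{n×n} × ℝ^{n×m} : for every column index i, (column i of X̂₁) − A·(column i of X̂₀) − B·(column i of U₀) ∈ D } is nonempty, convex, and compact. -/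
open Matrix

/-!
The residual of `(A, B)` at sample `i` is `X̂₁ᵢ - L(A, B)ᵢ` for the linear map
`L(A, B) = (A X̂₀ᵢ + B U₀ᵢ)ᵢ`, so `I` is the preimage of the compact convex box `Dᴺ` under an
affine map with linear part `-L`; this makes `I` convex. Row `j` of `L(A, B)` is `[A_j, B_j] Z`,
and full row rank of `Z` makes `v ↦ v Z` injective, hence `L` is injective. An injective linear
map out of a finite-dimensional space is a closed embedding, so the preimage is compact.
-/

theorem Matrix.vecMul_injective_of_rank_eq_card {K m n : Type*} [Field K] [Fintype m] [Fintype n]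
    {Z : Matrix m n K} (h : Z.rank = Fintype.card m) : Function.Injective Z.vecMul := by
  rw [vecMul_injective_iff, linearIndependent_iff_card_eq_finrank_span, Set.finrank,
    ← rank_eq_finrank_span_row, h]

section SubMapPreimage

variable {𝕜 E F : Type*} [AddCommGroup E] [AddCommGroup F]

theorem Convex.setOf_sub_map_mem [Ring 𝕜] [PartialOrder 𝕜] [Module 𝕜 E] [Module 𝕜 F]
    {K : Set F} (hK : Convex 𝕜 K) (L : E →ₗ[𝕜] F) (c : F) : Convex 𝕜 {x | c - L x ∈ K} :=
  hK.affine_preimage (AffineMap.const 𝕜 E c - L.toAffineMap)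

theorem IsCompact.setOf_sub_map_mem [NontriviallyNormedField 𝕜] [CompleteSpace 𝕜]
    [Module 𝕜 E] [Module 𝕜 F] [TopologicalSpace E] [IsTopologicalAddGroup E]
    [ContinuousSMul 𝕜 E] [T2Space E] [FiniteDimensional 𝕜 E] [TopologicalSpace F]
    [IsTopologicalAddGroup F] [ContinuousSMul 𝕜 F] [T2Space F]
    {K : Set F} (hK : IsCompact K) {L : E →ₗ[𝕜] F} (hL : Function.Injective L) (c : F) :
    IsCompact {x | c - L x ∈ K} :=
  (LinearMap.isClosedEmbedding_of_injective (LinearMap.ker_eq_bot.2 hL)).isCompact_preimage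
    ((Homeomorph.subLeft c).isCompact_preimage.2 hK)

end SubMapPreimage

section StackedResponse

variable {R ρ ι κ ν : Type*} [CommSemiring R] [Fintype ι] [Fintype κ]

def stackedResponse (X₀ : Matrix ι ν R) (U₀ : Matrix κ ν R) :
    (Matrix ρ ι R × Matrix ρ κ R) →ₗ[R] (ν → ρ → R) where
  toFun AB i := AB.1 *ᵥ X₀ᵀ i + AB.2 *ᵥ U₀ᵀ i
  map_add' _ _ := by ext; simp [add_mulVec]; abel
  map_smul' _ _ := by ext; simp [smul_mulVec, mul_add]

theorem stackedResponse_injective {X₀ : Matrix ι ν R} {U₀ : Matrix κ ν R}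
    (h : Function.Injective (fromRows X₀ U₀).vecMul) :
    Function.Injective (stackedResponse (ρ := ρ) X₀ U₀) := by
  intro x y hxy
  have hrow (j : ρ) : Sum.elim (x.1 j) (x.2 j) = Sum.elim (y.1 j) (y.2 j) := h <| by
    simp only [sumElim_vecMul_fromRows]
    ext i
    exact congrFun (congrFun hxy i) j
  exact Prod.ext (funext fun j => (Sum.elim_eq_iff.1 (hrow j)).1)
    (funext fun j => (Sum.elim_eq_iff.1 (hrow j)).2)

end StackedResponse

theorem stmt1_general {n m N : ℕ}
    (X0 X1 : Matrix (Fin n) (Fin N) ℝ) (U0 : Matrix (Fin m) (Fin N) ℝ)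
    (D : Set (Fin n → ℝ)) (hDc : IsCompact D) (hDconv : Convex ℝ D)
    (Z : Matrix (Fin n ⊕ Fin m) (Fin N) ℝ) (hZ : Z = Matrix.fromRows X0 U0)
    (hrank : Z.rank = n + m)
    (htrue : ∃ (As : Matrix (Fin n) (Fin n) ℝ) (Bs : Matrix (Fin n) (Fin m) ℝ),
      ∀ i : Fin N, X1ᵀ i - As.mulVec (X0ᵀ i) - Bs.mulVec (U0ᵀ i) ∈ D)
    (I : Set (Matrix (Fin n) (Fin n) ℝ × Matrix (Fin n) (Fin m) ℝ))
    (hI : I = { AB | ∀ i : Fin N,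
      X1ᵀ i - AB.1.mulVec (X0ᵀ i) - AB.2.mulVec (U0ᵀ i) ∈ D }) :
    I.Nonempty ∧ Convex ℝ I ∧ IsCompact I := by
  obtain ⟨As, Bs, hAsBs⟩ := htrue
  have hI_box : I = {AB | X1.col - stackedResponse X0 U0 AB ∈ Set.univ.pi fun _ => D} := by
    simp [hI, stackedResponse, sub_sub]; rfl
  have hL : Function.Injective (stackedResponse (ρ := Fin n) X0 U0) :=
    stackedResponse_injective <| hZ ▸ vecMul_injective_of_rank_eq_card (by simpa using hrank)
  refine ⟨⟨(As, Bs), hI ▸ hAsBs⟩, ?_, ?_⟩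
  · rw [hI_box]
    exact (convex_pi fun _ _ => hDconv).setOf_sub_map_mem _ _
  · rw [hI_box]
    exact (isCompact_univ_pi fun _ => hDc).setOf_sub_map_mem hL _

/-- With full-row-rank stacked data matrix `Z = [X̂₀; U₀]` and a compact
convex residual set `D` containing the true residuals, the data-consistency set of pairs
`(A, B)` whose column residuals all lie in `D` is nonempty, convex, and compact. -/
theorem stmt1 {n m N : ℕ} (hn : 0 < n) (hm : 0 < m) (hN : 0 < N)
    (X0 X1 : Matrix (Fin n) (Fin N) ℝ) (U0 : Matrix (Fin m) (Fin N) ℝ)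
    (D : Set (Fin n → ℝ)) (hDc : IsCompact D) (hDconv : Convex ℝ D)
    (Z : Matrix (Fin n ⊕ Fin m) (Fin N) ℝ) (hZ : Z = Matrix.fromRows X0 U0)
    (hrank : Z.rank = n + m)
    (htrue : ∃ (As : Matrix (Fin n) (Fin n) ℝ) (Bs : Matrix (Fin n) (Fin m) ℝ),
      ∀ i : Fin N, X1ᵀ i - As.mulVec (X0ᵀ i) - Bs.mulVec (U0ᵀ i) ∈ D)
    (I : Set (Matrix (Fin n) (Fin n) ℝ × Matrix (Fin n) (Fin m) ℝ))
    (hI : I = { AB | ∀ i : Fin N,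
      X1ᵀ i - AB.1.mulVec (X0ᵀ i) - AB.2.mulVec (U0ᵀ i) ∈ D }) :
    I.Nonempty ∧ Convex ℝ I ∧ IsCompact I :=
  stmt1_general X0 X1 U0 D hDc hDconv Z hZ hrank htrue I hI
end

section
/- Let P ∈ ℝ^{n×n} be symmetric positive definite, β > 0, and let A ∈ ℝ^{n×n} satisfy A P Aᵀ ⪯ P − βI. Let λmax(P) denote the largest eigenvalue of P. Then 0 ≤ 1 − β/λmax(P) < 1, and for every e ∈ ℝⁿ, (A e)ᵀ P⁻¹ (A e) ≤ (1 − β/λmax(P)) · eᵀ P⁻¹ e. -/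
/-!
Write `c = 1 - β / λmax`. Since `A P Aᵀ ⪰ 0`, the hypothesis gives `βI ⪯ P`, so `β ≤ λmax`
and `0 ≤ c < 1`; and since `P ⪯ λmax I`, it gives `A P Aᵀ ⪯ P - βI ⪯ P - (β / λmax) P = c P`.
This bound transfers to the inverse: with `s = (Ae)ᵀ P⁻¹ (Ae)` and `w = P Aᵀ P⁻¹ A e` one has
`eᵀ P⁻¹ w = s` and `wᵀ P⁻¹ w ≤ c s`, so Cauchy–Schwarz for the inner product defined by `P⁻¹`
yields `s² ≤ (eᵀ P⁻¹ e) · c s`.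
-/

open Matrix
open scoped MatrixOrder

namespace Matrix

variable {n : Type*} [Fintype n] [DecidableEq n]

lemma IsHermitian.le_smul_one_iff {P : Matrix n n ℝ} (hP : P.IsHermitian) {r : ℝ} :
    P ≤ r • 1 ↔ ∀ i, hP.eigenvalues i ≤ r := by
  rw [← Algebra.algebraMap_eq_smul_one, le_algebraMap_iff_spectrum_le hP.isSelfAdjoint,
    hP.spectrum_real_eq_range_eigenvalues, Set.forall_mem_range]

lemma IsHermitian.smul_one_le_iff {P : Matrix n n ℝ} (hP : P.IsHermitian) {r : ℝ} :
    r • 1 ≤ P ↔ ∀ i, r ≤ hP.eigenvalues i := by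
  rw [← Algebra.algebraMap_eq_smul_one, algebraMap_le_iff_le_spectrum hP.isSelfAdjoint,
    hP.spectrum_real_eq_range_eigenvalues, Set.forall_mem_range]

omit [DecidableEq n] in
lemma PosSemidef.dotProduct_mulVec_mul_self_le {M : Matrix n n ℝ} (hM : M.PosSemidef)
    (x y : n → ℝ) :
    (x ⬝ᵥ M *ᵥ y) * (x ⬝ᵥ M *ᵥ y) ≤ (x ⬝ᵥ M *ᵥ x) * (y ⬝ᵥ M *ᵥ y) := by
  let := M.toSeminormedAddCommGroup hM
  let := M.toInnerProductSpace hM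
  have h : ∀ u v : n → ℝ, inner ℝ u v = u ⬝ᵥ M *ᵥ v := fun u v => by
    change (M *ᵥ v) ⬝ᵥ star u = _
    rw [star_trivial, dotProduct_comm]
  simpa only [h] using real_inner_mul_inner_self_le x y

omit [DecidableEq n] in
lemma dotProduct_mulVec_le_of_le {M N : Matrix n n ℝ} (h : M ≤ N) (x : n → ℝ) :
    x ⬝ᵥ M *ᵥ x ≤ x ⬝ᵥ N *ᵥ x := by
  have := h.dotProduct_mulVec_nonneg x
  rw [star_trivial, sub_mulVec, dotProduct_sub] at this
  linarith

lemma PosDef.dotProduct_inv_mulVec_le_of_mul_mul_transpose_le {P A : Matrix n n ℝ}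
    (hP : P.PosDef) {c : ℝ} (hc : 0 ≤ c) (h : A * P * Aᵀ ≤ c • P) (e : n → ℝ) :
    A *ᵥ e ⬝ᵥ P⁻¹ *ᵥ (A *ᵥ e) ≤ c * (e ⬝ᵥ P⁻¹ *ᵥ e) := by
  have hdet : IsUnit P.det := (P.isUnit_iff_isUnit_det).mp hP.isUnit
  have hQ : P⁻¹.PosSemidef := hP.inv.posSemidef
  set s := A *ᵥ e ⬝ᵥ P⁻¹ *ᵥ (A *ᵥ e)
  set z := P⁻¹ *ᵥ (A *ᵥ e)
  set y := Aᵀ *ᵥ z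
  set w := P *ᵥ y
  have hQw : P⁻¹ *ᵥ w = y := by rw [mulVec_mulVec, nonsing_inv_mul P hdet, one_mulVec]
  have hPz : P *ᵥ z = A *ᵥ e := by rw [mulVec_mulVec, mul_nonsing_inv P hdet, one_mulVec]
  have hew : e ⬝ᵥ P⁻¹ *ᵥ w = s := by
    rw [hQw, dotProduct_mulVec, vecMul_transpose]
  have hww : w ⬝ᵥ P⁻¹ *ᵥ w ≤ c * s := by
    calc w ⬝ᵥ P⁻¹ *ᵥ w = z ⬝ᵥ (A * P * Aᵀ) *ᵥ z := by
          rw [hQw, dotProduct_comm, ← mulVec_mulVec, ← mulVec_mulVec, dotProduct_mulVec z A,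
            ← mulVec_transpose]
      _ ≤ z ⬝ᵥ (c • P) *ᵥ z := dotProduct_mulVec_le_of_le h z
      _ = c * s := by rw [smul_mulVec, dotProduct_smul, hPz, dotProduct_comm, smul_eq_mul]
  have hs : 0 ≤ s := by simpa only [star_trivial] using hQ.dotProduct_mulVec_nonneg (A *ᵥ e)
  have hq : 0 ≤ e ⬝ᵥ P⁻¹ *ᵥ e := by simpa only [star_trivial] using hQ.dotProduct_mulVec_nonneg e
  have hcs := hQ.dotProduct_mulVec_mul_self_le e w
  rw [hew] at hcs
  rcases hs.eq_or_lt with hs0 | hs0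
  · rw [← hs0]; positivity
  · nlinarith [mul_le_mul_of_nonneg_left hww hq]

end Matrix

/-- If `P ≻ 0`, `β > 0`, and `A P Aᵀ ⪯ P - βI`, then with
`λmax(P)` the largest eigenvalue of `P`, we have `0 ≤ 1 - β/λmax(P) < 1` and
`(Ae)ᵀ P⁻¹ (Ae) ≤ (1 - β/λmax(P)) eᵀ P⁻¹ e` for every `e`. -/
theorem stmt6 {n : ℕ} (hn : 0 < n) (P : Matrix (Fin n) (Fin n) ℝ) (hP : P.PosDef)
    (β : ℝ) (hβ : 0 < β) (A : Matrix (Fin n) (Fin n) ℝ)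
    (hcontr : (P - β • (1 : Matrix (Fin n) (Fin n) ℝ) - A * P * Aᵀ).PosSemidef)
    (lamMax : ℝ) (hlam : lamMax = ⨆ i, hP.isHermitian.eigenvalues i) :
    (0 ≤ 1 - β / lamMax ∧ 1 - β / lamMax < 1) ∧
      ∀ e : Fin n → ℝ,
        (A.mulVec e) ⬝ᵥ P⁻¹.mulVec (A.mulVec e) ≤
          (1 - β / lamMax) * (e ⬝ᵥ P⁻¹.mulVec e) := by
  have hle : ∀ i, hP.isHermitian.eigenvalues i ≤ lamMax := fun i =>
    hlam ▸ le_ciSup (Set.finite_range _).bddAbove i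
  have hβP : β • 1 ≤ P := by
    have hAPA : 0 ≤ A * P * Aᵀ := by
      simpa using (hP.posSemidef.mul_mul_conjTranspose_same A).nonneg
    exact sub_nonneg.mp (hAPA.trans hcontr)
  have hβlam : β ≤ lamMax := (hP.isHermitian.smul_one_le_iff.mp hβP ⟨0, hn⟩).trans (hle _)
  have hlam_pos : 0 < lamMax := hβ.trans_le hβlam
  have hratio_pos : 0 < β / lamMax := div_pos hβ hlam_pos
  have hratio_le : β / lamMax ≤ 1 := (div_le_one hlam_pos).mpr hβlam
  have hc : 0 ≤ 1 - β / lamMax := sub_nonneg.mpr hratio_le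
  refine ⟨⟨hc, sub_lt_self 1 hratio_pos⟩,
    hP.dotProduct_inv_mulVec_le_of_mul_mul_transpose_le hc ?_⟩
  have hscaled : (β / lamMax) • P ≤ β • 1 :=
    calc (β / lamMax) • P ≤ (β / lamMax) • (lamMax • 1 : Matrix (Fin n) (Fin n) ℝ) :=
          smul_le_smul_of_nonneg_left (hP.isHermitian.le_smul_one_iff.mpr hle) hratio_pos.le
      _ = β • 1 := by rw [smul_smul, div_mul_cancel₀ _ hlam_pos.ne']
  calc A * P * Aᵀ ≤ P - β • 1 := hcontr
    _ ≤ P - (β / lamMax) • P := sub_le_sub_left hscaled P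
    _ = (1 - β / lamMax) • P := by rw [sub_smul, one_smul]
end

section
/- Let Ω ⊆ ℝⁿ be a convex set with 0 ∈ Ω, let 𝒜 be a set of linear maps from ℝⁿ to ℝⁿ, and let 0 ≤ c < 1 satisfy ⋃_{A ∈ 𝒜} A '' Ω ⊆ c • Ω. Let D ⊆ d̄ • Ω for some d̄ ≥ 0, define Φ(S) := convexHull( ⋃_{A ∈ 𝒜} A '' S ) + D, and let S₀ ⊆ ρ₀ • Ω for some ρ₀ ≥ 0 with iterates S_{t+1} := Φ(S_t). Then the iterates are uniformly bounded: S_t ⊆ r • Ω for every t ∈ ℕ, where r := max(ρ₀, d̄/(1 − c)). -/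
open Pointwise

lemma smul_mono_set {n : ℕ} {Ω : Set (Fin n → ℝ)} (hΩ : Convex ℝ Ω)
    (h0 : (0 : Fin n → ℝ) ∈ Ω) {a b : ℝ} (ha : 0 ≤ a) (hab : a ≤ b) :
    a • Ω ⊆ b • Ω := by
  have : b • Ω = a • Ω + (b - a) • Ω := by
    rw [← hΩ.add_smul ha (by linarith)]; ring_nf
  rw [this]
  intro x hx
  exact ⟨x, hx, 0, ⟨0, h0, smul_zero _⟩, by simp⟩

/-- Under the contraction inclusion `⋃_{A ∈ 𝒜} A '' Ω ⊆ c • Ω` with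
`0 ≤ c < 1`, `D ⊆ d̄ • Ω`, and seed `S₀ ⊆ ρ₀ • Ω`, the iterates `S_{t+1} = Φ(S_t)` of
`Φ(S) = co(⋃_{A ∈ 𝒜} A '' S) + D` satisfy `S_t ⊆ r • Ω` for all `t`, where
`r = max(ρ₀, d̄/(1 - c))`. -/
theorem stmt10 {n : ℕ} (Ω : Set (Fin n → ℝ)) (hΩconv : Convex ℝ Ω)
    (hΩ0 : (0 : Fin n → ℝ) ∈ Ω)
    (𝒜 : Set ((Fin n → ℝ) →ₗ[ℝ] (Fin n → ℝ)))
    (c : ℝ) (hc0 : 0 ≤ c) (hc1 : c < 1) (hA : (⋃ A ∈ 𝒜, A '' Ω) ⊆ c • Ω)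
    (D : Set (Fin n → ℝ)) (dbar : ℝ) (hdbar : 0 ≤ dbar) (hD : D ⊆ dbar • Ω)
    (Φ : Set (Fin n → ℝ) → Set (Fin n → ℝ))
    (hΦ : ∀ S, Φ S = convexHull ℝ (⋃ A ∈ 𝒜, A '' S) + D)
    (S : ℕ → Set (Fin n → ℝ)) (ρ₀ : ℝ) (hρ₀ : 0 ≤ ρ₀) (hS0 : S 0 ⊆ ρ₀ • Ω)
    (hiter : ∀ t : ℕ, S (t + 1) = Φ (S t))
    (r : ℝ) (hr : r = max ρ₀ (dbar / (1 - c))) :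
    ∀ t : ℕ, S t ⊆ r • Ω := by
  have h1c : 0 < 1 - c := by linarith
  have hr0 : 0 ≤ r := hr ▸ le_trans hρ₀ (le_max_left _ _)
  have hrd : dbar ≤ r * (1 - c) := by
    have : dbar / (1 - c) ≤ r := hr ▸ le_max_right _ _
    calc dbar = dbar / (1 - c) * (1 - c) := by field_simp
    _ ≤ r * (1 - c) := by nlinarith
  intro t
  induction t with
  | zero => exact hS0.trans (smul_mono_set hΩconv hΩ0 hρ₀ (hr ▸ le_max_left _ _))
  | succ t ih =>
    rw [hiter, hΦ]
    have hstep : (⋃ A ∈ 𝒜, A '' S t) ⊆ (r * c) • Ω := by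
      intro x hx
      simp only [Set.mem_iUnion] at hx
      obtain ⟨A, hA𝒜, y, hy, rfl⟩ := hx
      obtain ⟨w, hw, rfl⟩ := ih hy
      have : A w ∈ c • Ω := hA (Set.mem_iUnion₂.2 ⟨A, hA𝒜, ⟨w, hw, rfl⟩⟩)
      obtain ⟨z, hz, hzeq⟩ := this
      refine ⟨z, hz, ?_⟩
      simpa [smul_smul, mul_comm] using congrArg (r • ·) hzeq
    have hhull : convexHull ℝ (⋃ A ∈ 𝒜, A '' S t) ⊆ (r * c) • Ω :=
      convexHull_min hstep (hΩconv.smul _)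
    have hadd : convexHull ℝ (⋃ A ∈ 𝒜, A '' S t) + D ⊆ (r * c) • Ω + dbar • Ω :=
      Set.add_subset_add hhull hD
    refine hadd.trans ?_
    rw [← hΩconv.add_smul (by positivity) hdbar]
    exact smul_mono_set hΩconv hΩ0 (by positivity) (by nlinarith)
end

section
/- Let Ω ⊆ ℝⁿ be a convex set with 0 ∈ Ω, let 𝒜 be a set of linear maps from ℝⁿ to ℝⁿ, and let 0 ≤ c < 1 satisfy ⋃_{A ∈ 𝒜} A '' Ω ⊆ c • Ω. Let D ⊆ ℝⁿ and define Φ(S) := convexHull( ⋃_{A ∈ 𝒜} A '' S ) + D (Minkowski sum). Suppose S ⊆ ℝⁿ and ε ≥ 0 satisfy the ε-stopping condition Φ(S) ⊆ S + ε • Ω. Then the inflated set E := S + (ε/(1 − c)) • Ω is robust positively invariant: Φ(E) ⊆ E. -/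
/-!
Each `A ∈ 𝒜` maps `S + α • Ω` into `A '' S + (α c) • Ω`, and since `(α c) • Ω` is convex, taking
convex hulls and adding `D` gives `Φ(S + α • Ω) ⊆ Φ(S) + (α c) • Ω ⊆ S + (ε + α c) • Ω`.
The choice `α = ε / (1 - c)` is the fixed point of `α ↦ ε + α c`.
-/

open Pointwise

section

variable {R E : Type*} [CommSemiring R] [AddCommMonoid E] [Module R E]

theorem LinearMap.image_add_smul_subset {A : E →ₗ[R] E} {Ω : Set E} {c : R}
    (hA : A '' Ω ⊆ c • Ω) (S : Set E) (a : R) :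
    A '' (S + a • Ω) ⊆ A '' S + (a * c) • Ω := by
  rw [Set.image_add, image_smul_set, mul_smul]
  exact Set.add_subset_add_left (Set.smul_set_mono hA)

theorem biUnion_image_add_smul_subset {𝒜 : Set (E →ₗ[R] E)} {Ω : Set E} {c : R}
    (hA : (⋃ A ∈ 𝒜, A '' Ω) ⊆ c • Ω) (S : Set E) (a : R) :
    (⋃ A ∈ 𝒜, A '' (S + a • Ω)) ⊆ (⋃ A ∈ 𝒜, A '' S) + (a * c) • Ω :=
  Set.iUnion₂_subset fun _ hA𝒜 =>
    (LinearMap.image_add_smul_subset ((Set.subset_biUnion_of_mem hA𝒜).trans hA) S a).trans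
      (Set.add_subset_add_right <|
        Set.subset_biUnion_of_mem (u := fun A : E →ₗ[R] E => A '' S) hA𝒜)

end

section

variable {E : Type*} [AddCommGroup E] [Module ℝ E]

theorem convexHull_subset_add_of_subset_add {X Y C : Set E} (hC : Convex ℝ C) (h : X ⊆ Y + C) :
    convexHull ℝ X ⊆ convexHull ℝ Y + C := by
  simpa only [convexHull_add, hC.convexHull_eq] using convexHull_mono (𝕜 := ℝ) h

theorem convexHull_biUnion_image_add_smul_subset {𝒜 : Set (E →ₗ[ℝ] E)} {Ω : Set E}
    (hΩ : Convex ℝ Ω) {c : ℝ}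
    (hA : (⋃ A ∈ 𝒜, A '' Ω) ⊆ c • Ω) (S D : Set E) (a : ℝ) :
    convexHull ℝ (⋃ A ∈ 𝒜, A '' (S + a • Ω)) + D ⊆
      convexHull ℝ (⋃ A ∈ 𝒜, A '' S) + D + (a * c) • Ω := by
  rw [add_right_comm]
  exact Set.add_subset_add_right <| convexHull_subset_add_of_subset_add (hΩ.smul _)
    (biUnion_image_add_smul_subset hA S a)

end

theorem stmt11_general {n : ℕ} (Ω : Set (Fin n → ℝ)) (hΩconv : Convex ℝ Ω)
    (𝒜 : Set ((Fin n → ℝ) →ₗ[ℝ] (Fin n → ℝ)))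
    (c : ℝ) (hc0 : 0 ≤ c) (hc1 : c < 1) (hA : (⋃ A ∈ 𝒜, A '' Ω) ⊆ c • Ω)
    (D : Set (Fin n → ℝ))
    (Φ : Set (Fin n → ℝ) → Set (Fin n → ℝ))
    (hΦ : ∀ X, Φ X = convexHull ℝ (⋃ A ∈ 𝒜, A '' X) + D)
    (S : Set (Fin n → ℝ)) (ε : ℝ) (hε : 0 ≤ ε)
    (hstop : Φ S ⊆ S + ε • Ω)
    (E : Set (Fin n → ℝ)) (hE : E = S + (ε / (1 - c)) • Ω) :
    Φ E ⊆ E := by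
  have hfix : ε + ε / (1 - c) * c = ε / (1 - c) := by
    field_simp [(by linarith : (1 : ℝ) - c ≠ 0)]
    ring
  set α := ε / (1 - c)
  have hα : 0 ≤ α := div_nonneg hε (by linarith)
  subst hE
  calc Φ (S + α • Ω) ⊆ Φ S + (α * c) • Ω := by
        simpa only [hΦ] using convexHull_biUnion_image_add_smul_subset hΩconv hA S D α
    _ ⊆ S + ε • Ω + (α * c) • Ω := Set.add_subset_add_right hstop
    _ = S + α • Ω := by
        rw [add_assoc, ← hΩconv.add_smul hε (mul_nonneg hα hc0), hfix]

/-- If `⋃_{A ∈ 𝒜} A '' Ω ⊆ c • Ω` with `0 ≤ c < 1` and the ε-stopping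
condition `Φ(S) ⊆ S + ε • Ω` holds, where `Φ(S) = co(⋃_{A ∈ 𝒜} A '' S) + D`, then the
inflated set `E = S + (ε/(1 - c)) • Ω` is robust positively invariant: `Φ(E) ⊆ E`. -/
theorem stmt11 {n : ℕ} (Ω : Set (Fin n → ℝ)) (hΩconv : Convex ℝ Ω)
    (hΩ0 : (0 : Fin n → ℝ) ∈ Ω)
    (𝒜 : Set ((Fin n → ℝ) →ₗ[ℝ] (Fin n → ℝ)))
    (c : ℝ) (hc0 : 0 ≤ c) (hc1 : c < 1) (hA : (⋃ A ∈ 𝒜, A '' Ω) ⊆ c • Ω)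
    (D : Set (Fin n → ℝ))
    (Φ : Set (Fin n → ℝ) → Set (Fin n → ℝ))
    (hΦ : ∀ X, Φ X = convexHull ℝ (⋃ A ∈ 𝒜, A '' X) + D)
    (S : Set (Fin n → ℝ)) (ε : ℝ) (hε : 0 ≤ ε)
    (hstop : Φ S ⊆ S + ε • Ω)
    (E : Set (Fin n → ℝ)) (hE : E = S + (ε / (1 - c)) • Ω) :
    Φ E ⊆ E :=
  stmt11_general Ω hΩconv 𝒜 c hc0 hc1 hA D Φ hΦ S ε hε hstop E hE
end
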